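/- arXiv:1801.04548 — 4 statements merged into one kernel-verified Lean document; each statement's English description precedes it below -/
import Mathlib

section
/- For any m-by-n complex matrix F with unit-norm columns, equality (1/n)·tr((FF')^d) = (n/m)^(d-1) holds for some d ≥ 2 if and only if FF' = (n/m)·I_m (F is a uniform tight frame). -/
/-!
The frame operator `F * Fᴴ` is positive semidefinite with eigenvalues `λᵢ ≥ 0` summing to
`tr (Fᴴ * F) = n`, and `tr ((F * Fᴴ) ^ d) = ∑ λᵢ ^ d`. By Jensen's inequality for the strictly
convex `x ↦ x ^ d` (`d ≥ 2`), `∑ λᵢ ^ d ≥ m (n / m) ^ d = n (n / m) ^ (d - 1)`, with equality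
exactly when every `λᵢ = n / m`, i.e. when `F * Fᴴ = (n / m) • 1`.
-/

open Matrix BigOperators

theorem sum_pow_eq_card_mul_pow_mean_iff {ι : Type*} [Fintype ι] [Nonempty ι] {x : ι → ℝ}
    (hx : ∀ i, 0 ≤ x i) {d : ℕ} (hd : 2 ≤ d) :
    ∑ i, x i ^ d = Fintype.card ι * ((∑ i, x i) / Fintype.card ι) ^ d ↔
      ∀ i, x i = (∑ j, x j) / Fintype.card ι := by
  have hc : (Fintype.card ι : ℝ) ≠ 0 := by positivity
  have hw : ∑ _i : ι, (Fintype.card ι : ℝ)⁻¹ = 1 := by simp [hc]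
  have jensen := (strictConvexOn_pow hd).map_sum_eq_iff (t := Finset.univ) (p := x)
    (fun _ _ ↦ by positivity) hw (fun i _ ↦ hx i)
  simp only [smul_eq_mul, ← Finset.mul_sum, Finset.mem_univ, forall_const] at jensen
  rw [inv_mul_eq_div] at jensen
  rw [← jensen, eq_comm, eq_inv_mul_iff_mul_eq₀ hc]

namespace Matrix.IsHermitian

variable {𝕜 ι : Type*} [RCLike 𝕜] [Fintype ι] [DecidableEq ι] {A : Matrix ι ι 𝕜}

theorem trace_pow_eq_sum_eigenvalues_pow (hA : A.IsHermitian) (d : ℕ) :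
    (A ^ d).trace = ((∑ i, hA.eigenvalues i ^ d : ℝ) : 𝕜) := by
  conv_lhs => rw [hA.spectral_theorem, ← map_pow, Unitary.conjStarAlgAut_apply, trace_mul_cycle,
    Unitary.coe_star_mul_self, one_mul, diagonal_pow, trace_diagonal]
  simp

theorem eigenvalues_eq_const_iff (hA : A.IsHermitian) (c : ℝ) :
    (∀ i, hA.eigenvalues i = c) ↔ A = (c : 𝕜) • 1 := by
  rw [← RCLike.real_smul_eq_coe_smul, ← Algebra.algebraMap_eq_smul_one]
  constructor
  · intro h
    refine CFC.eq_algebraMap_of_spectrum_subset_singleton A c ?_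
    rw [hA.spectrum_real_eq_range_eigenvalues]
    rintro _ ⟨i, rfl⟩
    exact h i
  · intro h i
    have : Nonempty ι := ⟨i⟩
    have hspec : Set.range hA.eigenvalues = {c} := by
      rw [← hA.spectrum_real_eq_range_eigenvalues, h, spectrum.scalar_eq]
    exact hspec.subset ⟨i, rfl⟩

end Matrix.IsHermitian

theorem erasure_welch_stmt1 (m n : ℕ) (hm : 1 ≤ m) (hmn : m ≤ n)
    (F : Matrix (Fin m) (Fin n) ℂ)
    (hcol : ∀ i, (Fᴴ * F) i i = 1) :
    (∃ d : ℕ, 2 ≤ d ∧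
      (1 / (n : ℝ)) * (Matrix.trace ((F * Fᴴ) ^ d)).re = ((n : ℝ) / m) ^ (d - 1)) ↔
    F * Fᴴ = ((n : ℂ) / (m : ℂ)) • (1 : Matrix (Fin m) (Fin m) ℂ) := by
  have : Nonempty (Fin m) := ⟨⟨0, hm⟩⟩
  have hm0 : (m : ℝ) ≠ 0 := by positivity
  have hn0 : (n : ℝ) ≠ 0 := by have := hm.trans hmn; positivity
  have hG := isHermitian_mul_conjTranspose_self F
  have hsum : ∑ i, hG.eigenvalues i = n := by
    have htr : (F * Fᴴ).trace = n := by
      rw [trace_mul_comm]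
      simp [trace, hcol]
    have := hG.trace_pow_eq_sum_eigenvalues_pow 1
    simp only [pow_one, htr, RCLike.ofReal_eq_complex_ofReal] at this
    exact_mod_cast this.symm
  have key (d : ℕ) (hd : 2 ≤ d) :
      (1 / (n : ℝ)) * ((F * Fᴴ) ^ d).trace.re = ((n : ℝ) / m) ^ (d - 1) ↔
        ∀ i, hG.eigenvalues i = n / m := by
    have hpow : (m : ℝ) * (n / m) ^ d = (n / m) ^ (d - 1) * n := by
      rw [← Nat.sub_add_cancel (one_le_two.trans hd), pow_succ]
      field_simp
      simp
    have hmean := sum_pow_eq_card_mul_pow_mean_iff (eigenvalues_self_mul_conjTranspose_nonneg F) hd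
    rw [hsum, Fintype.card_fin, hpow] at hmean
    rw [← hmean, hG.trace_pow_eq_sum_eigenvalues_pow, RCLike.ofReal_eq_complex_ofReal,
      Complex.ofReal_re, one_div_mul_eq_div, div_eq_iff hn0]
  have hc : (n : ℂ) / m = ((n / m : ℝ) : ℂ) := by push_cast; rfl
  rw [hc]
  refine Iff.trans ?_ (hG.eigenvalues_eq_const_iff _)
  exact ⟨fun ⟨d, hd, h⟩ ↦ (key d hd).1 h, fun h ↦ ⟨2, le_rfl, (key 2 le_rfl).2 h⟩⟩
end

section
/- For any m-by-n complex matrix F with unit-norm columns, the sum over all ordered pairs i≠j of |⟨f_i, f_j⟩|² is at least n²/m − n, with equality if and only if FF' = (n/m)·I_m. -/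
/-! With `G = Fᴴ F`, `A = F Fᴴ` and `c = n / m`, the squared Frobenius norms of `G` and `A` agree,
both being `tr (Fᴴ F Fᴴ F)`. Since `tr A = tr G = n`, expanding gives
`‖A - c • 1‖² = ‖A‖² - n² / m`, so the off-diagonal part of `‖G‖²`, which is `‖G‖² - n`, equals
`‖A - c • 1‖² + n² / m - n`: this is at least `n² / m - n`, with equality iff `A = c • 1`. -/

open Matrix BigOperators Finset

theorem sum_sum_erase_eq_sub_sum_diag {ι : Type*} [Fintype ι] [DecidableEq ι] (f : ι → ι → ℝ) :
    ∑ i, ∑ j ∈ univ.erase i, f i j = ∑ i, ∑ j, f i j - ∑ i, f i i := by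
  simp only [sum_erase_eq_sub (mem_univ _), sum_sub_distrib]

theorem two_mul_div_mul_sub_div_sq_mul (n m : ℝ) :
    2 * (n / m) * n - (n / m) ^ 2 * m = n ^ 2 / m := by
  rcases eq_or_ne m 0 with rfl | hm
  · simp
  · field_simp
    ring

namespace Matrix

variable {𝕜 : Type*} [RCLike 𝕜] {l p : Type*} [Fintype l] [Fintype p]

theorem sum_sum_norm_sq_eq_re_trace_mul_conjTranspose (M : Matrix l p 𝕜) :
    ∑ i, ∑ j, ‖M i j‖ ^ 2 = RCLike.re (M * Mᴴ).trace := by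
  simp only [trace, diag, mul_apply, conjTranspose_apply, RCLike.star_def, RCLike.mul_conj,
    map_sum]
  norm_cast

theorem sum_sum_norm_sq_eq_zero_iff (M : Matrix l p 𝕜) :
    ∑ i, ∑ j, ‖M i j‖ ^ 2 = 0 ↔ M = 0 := by
  have hrow (i : l) : ∑ j, ‖M i j‖ ^ 2 = 0 ↔ ∀ j, M i j = 0 := by
    simp [Fintype.sum_eq_zero_iff_of_nonneg (fun _ => sq_nonneg _), funext_iff]
  simp only [Fintype.sum_eq_zero_iff_of_nonneg (fun _ => Fintype.sum_nonneg fun _ => sq_nonneg _),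
    funext_iff, Pi.zero_apply, hrow, ← Matrix.ext_iff, zero_apply]

theorem sum_sum_norm_sq_conjTranspose_mul_self (M : Matrix l p 𝕜) :
    ∑ i, ∑ j, ‖(Mᴴ * M) i j‖ ^ 2 = ∑ a, ∑ b, ‖(M * Mᴴ) a b‖ ^ 2 := by
  simp only [sum_sum_norm_sq_eq_re_trace_mul_conjTranspose, conjTranspose_mul,
    conjTranspose_conjTranspose, Matrix.mul_assoc]
  rw [trace_mul_comm Mᴴ, Matrix.mul_assoc, Matrix.mul_assoc]

theorem sum_sum_norm_sq_sub_smul_one [DecidableEq l] (A : Matrix l l 𝕜) (c : ℝ) :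
    ∑ a, ∑ b, ‖(A - (c : 𝕜) • 1) a b‖ ^ 2 =
      ∑ a, ∑ b, ‖A a b‖ ^ 2 - 2 * c * RCLike.re A.trace + c ^ 2 * Fintype.card l := by
  simp only [sum_sum_norm_sq_eq_re_trace_mul_conjTranspose, conjTranspose_sub,
    conjTranspose_smul, conjTranspose_one, RCLike.star_def, RCLike.conj_ofReal, sub_mul, mul_sub,
    Matrix.mul_smul, Matrix.smul_mul, Matrix.mul_one, Matrix.one_mul, smul_smul, trace_sub,
    trace_smul, trace_one, trace_conjTranspose, map_sub, smul_eq_mul,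
    RCLike.conj_re, RCLike.mul_re, RCLike.ofReal_re, RCLike.ofReal_im, RCLike.natCast_re,
    RCLike.natCast_im, mul_zero, sub_zero]
  ring

theorem sum_sum_erase_norm_sq_conjTranspose_mul_self_eq [DecidableEq l] [DecidableEq p]
    (F : Matrix l p 𝕜) (hcol : ∀ i, (Fᴴ * F) i i = 1) :
    ∑ i, ∑ j ∈ univ.erase i, ‖(Fᴴ * F) i j‖ ^ 2 =
      ∑ a, ∑ b, ‖(F * Fᴴ - (Fintype.card p / Fintype.card l : 𝕜) • (1 : Matrix l l 𝕜)) a b‖ ^ 2 +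
        (Fintype.card p : ℝ) ^ 2 / Fintype.card l - Fintype.card p := by
  have htrace : RCLike.re (F * Fᴴ).trace = Fintype.card p := by
    rw [trace_mul_comm]
    simp [trace, hcol]
  have hc : (Fintype.card p / Fintype.card l : 𝕜) =
      ((Fintype.card p / Fintype.card l : ℝ) : 𝕜) := by
    push_cast
    rfl
  rw [hc, sum_sum_erase_eq_sub_sum_diag, sum_sum_norm_sq_conjTranspose_mul_self,
    sum_sum_norm_sq_sub_smul_one, htrace, ← two_mul_div_mul_sub_div_sq_mul]
  simp [hcol]

end Matrix

theorem erasure_welch_stmt2_general (m n : ℕ)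
    (F : Matrix (Fin m) (Fin n) ℂ)
    (hcol : ∀ i, (Fᴴ * F) i i = 1) :
    ((n : ℝ) ^ 2 / m - n ≤ ∑ i, ∑ j ∈ Finset.univ.erase i, ‖(Fᴴ * F) i j‖ ^ 2) ∧
    ((∑ i, ∑ j ∈ Finset.univ.erase i, ‖(Fᴴ * F) i j‖ ^ 2 = (n : ℝ) ^ 2 / m - n) ↔
      F * Fᴴ = ((n : ℂ) / (m : ℂ)) • (1 : Matrix (Fin m) (Fin m) ℂ)) := by
  have hwelch := sum_sum_erase_norm_sq_conjTranspose_mul_self_eq F hcol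
  simp only [Fintype.card_fin] at hwelch
  have hnonneg : 0 ≤ ∑ a, ∑ b,
      ‖(F * Fᴴ - ((n : ℂ) / (m : ℂ)) • (1 : Matrix (Fin m) (Fin m) ℂ)) a b‖ ^ 2 := by positivity
  rw [hwelch, ← sub_eq_zero (a := F * Fᴴ), ← sum_sum_norm_sq_eq_zero_iff]
  constructor
  · linarith
  · constructor <;> intro h <;> linarith

theorem erasure_welch_stmt2 (m n : ℕ) (hm : 1 ≤ m) (hmn : m ≤ n)
    (F : Matrix (Fin m) (Fin n) ℂ)
    (hcol : ∀ i, (Fᴴ * F) i i = 1) :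
    ((n : ℝ) ^ 2 / m - n ≤ ∑ i, ∑ j ∈ Finset.univ.erase i, ‖(Fᴴ * F) i j‖ ^ 2) ∧
    ((∑ i, ∑ j ∈ Finset.univ.erase i, ‖(Fᴴ * F) i j‖ ^ 2 = (n : ℝ) ^ 2 / m - n) ↔
      F * Fᴴ = ((n : ℂ) / (m : ℂ)) • (1 : Matrix (Fin m) (Fin m) ℂ)) :=
  erasure_welch_stmt2_general m n F hcol
end

section
/- For any m-by-n complex matrix F with unit-norm columns, the maximum of |⟨f_i, f_j⟩|² over pairs i < j is at least (n−m)/((n−1)m). -/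
/-!
The frame potential `∑ i j, ‖(Fᴴ * F) i j‖ ^ 2` equals the same sum for the `m × m` matrix
`F * Fᴴ`, whose trace is `n`; Cauchy–Schwarz on its diagonal bounds the potential below by
`n ^ 2 / m`. Removing the `n` unit diagonal entries of the Gram matrix leaves at least
`n ^ 2 / m - n` spread over `n (n - 1)` off-diagonal entries, so one of them, and by Hermitian
symmetry one with `i < j`, is at least `(n - m) / ((n - 1) m)`.
-/

open Matrix BigOperators

namespace Matrix

variable {ι κ 𝕜 : Type*} [Fintype ι] [Fintype κ] [RCLike 𝕜]

theorem trace_conjTranspose_mul_self_eq_sum_norm_sq (A : Matrix κ ι 𝕜) :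
    trace (Aᴴ * A) = ((∑ i, ∑ j, ‖A i j‖ ^ 2 : ℝ) : 𝕜) := by
  simp only [trace, diag_apply, mul_apply, conjTranspose_apply, RCLike.star_def, RCLike.conj_mul]
  push_cast
  exact Finset.sum_comm

theorem sum_norm_sq_conjTranspose_mul_self (F : Matrix κ ι 𝕜) :
    ∑ i, ∑ j, ‖(Fᴴ * F) i j‖ ^ 2 = ∑ a, ∑ b, ‖(F * Fᴴ) a b‖ ^ 2 := by
  rw [← RCLike.ofReal_inj (K := 𝕜), ← trace_conjTranspose_mul_self_eq_sum_norm_sq,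
    ← trace_conjTranspose_mul_self_eq_sum_norm_sq]
  simp only [conjTranspose_mul, conjTranspose_conjTranspose, Matrix.mul_assoc]
  rw [trace_mul_comm]
  simp only [Matrix.mul_assoc]

theorem norm_trace_sq_le_card_mul_sum_norm_sq (A : Matrix ι ι 𝕜) :
    ‖trace A‖ ^ 2 ≤ Fintype.card ι * ∑ i, ∑ j, ‖A i j‖ ^ 2 :=
  calc ‖trace A‖ ^ 2 ≤ (∑ i, ‖A i i‖) ^ 2 := by gcongr; exact norm_sum_le _ _
    _ ≤ Fintype.card ι * ∑ i, ‖A i i‖ ^ 2 := sq_sum_le_card_mul_sum_sq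
    _ ≤ Fintype.card ι * ∑ i, ∑ j, ‖A i j‖ ^ 2 := by
      gcongr with i
      exact Finset.single_le_sum (f := fun j => ‖A i j‖ ^ 2) (fun j _ => by positivity)
        (Finset.mem_univ i)

theorem norm_trace_conjTranspose_mul_self_sq_le (F : Matrix κ ι 𝕜) :
    ‖trace (Fᴴ * F)‖ ^ 2 ≤ Fintype.card κ * ∑ i, ∑ j, ‖(Fᴴ * F) i j‖ ^ 2 := by
  rw [trace_mul_comm, sum_norm_sq_conjTranspose_mul_self]
  exact norm_trace_sq_le_card_mul_sum_norm_sq _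

end Matrix

namespace Finset

variable {ι : Type*} [Fintype ι]

theorem sum_sum_eq_sum_add_sum_offDiag {M : Type*} [AddCommMonoid M] [DecidableEq ι]
    (f : ι → ι → M) : ∑ i, ∑ j, f i j = ∑ i, f i i + ∑ p ∈ univ.offDiag, f p.1 p.2 := by
  rw [← sum_product', ← diag_union_offDiag, sum_union (disjoint_diag_offDiag _), sum_diag]

theorem exists_lt_and_le_of_card_offDiag_mul_le [LinearOrder ι] [Nontrivial ι]
    {f : ι → ι → ℝ} (hf : ∀ i j, f i j = f j i) {c : ℝ}
    (h : #(univ : Finset ι).offDiag * c ≤ ∑ p ∈ univ.offDiag, f p.1 p.2) :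
    ∃ i j, i < j ∧ c ≤ f i j := by
  obtain ⟨a, b, hab⟩ := exists_pair_ne ι
  obtain ⟨⟨i, j⟩, hmem, hc⟩ := exists_le_of_sum_le (s := univ.offDiag) (f := fun _ => c)
    (g := fun p => f p.1 p.2) ⟨(a, b), by simpa using hab⟩ (by rwa [sum_const, nsmul_eq_mul])
  rcases lt_or_gt_of_ne (mem_offDiag.1 hmem).2.2 with hlt | hlt
  exacts [⟨i, j, hlt, hc⟩, ⟨j, i, hlt, hf i j ▸ hc⟩]

end Finset

theorem erasure_welch_stmt3_general (m n : ℕ) (hm : 1 ≤ m) (hn : 2 ≤ n)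
    (F : Matrix (Fin m) (Fin n) ℂ)
    (hcol : ∀ i, (Fᴴ * F) i i = 1) :
    ∃ i j : Fin n, i < j ∧
      ((n : ℝ) - m) / (((n : ℝ) - 1) * m) ≤ ‖(Fᴴ * F) i j‖ ^ 2 := by
  have : Nontrivial (Fin n) := Fin.nontrivial_iff_two_le.2 hn
  have htrace : trace (Fᴴ * F) = n := by simp [trace, hcol]
  have hpotential : (n : ℝ) ^ 2 ≤
      m * (n + ∑ p ∈ Finset.univ.offDiag, ‖(Fᴴ * F) p.1 p.2‖ ^ 2) := by
    simpa [htrace, Finset.sum_sum_eq_sum_add_sum_offDiag, hcol] using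
      F.norm_trace_conjTranspose_mul_self_sq_le
  refine Finset.exists_lt_and_le_of_card_offDiag_mul_le (fun i j => ?_) ?_
  · rw [← (isHermitian_conjTranspose_mul_self F).apply i j, norm_star]
  · have hm0 : (0 : ℝ) < m := by exact_mod_cast hm
    rw [Finset.offDiag_card, Finset.card_univ, Fintype.card_fin,
      Nat.cast_sub (Nat.le_mul_self n), Nat.cast_mul]
    have hn1 : (n : ℝ) - 1 ≠ 0 := sub_ne_zero.2 (by exact_mod_cast (by omega : n ≠ 1))
    have hc : ((n : ℝ) * n - n) * ((n - m) / ((n - 1) * m)) = n ^ 2 / m - n := by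
      field_simp
    rw [hc, sub_le_iff_le_add', div_le_iff₀ hm0]
    linarith

theorem erasure_welch_stmt3 (m n : ℕ) (hm : 1 ≤ m) (hmn : m ≤ n) (hn : 2 ≤ n)
    (F : Matrix (Fin m) (Fin n) ℂ)
    (hcol : ∀ i, (Fᴴ * F) i i = 1) :
    ∃ i j : Fin n, i < j ∧
      ((n : ℝ) - m) / (((n : ℝ) - 1) * m) ≤ ‖(Fᴴ * F) i j‖ ^ 2 :=
  erasure_welch_stmt3_general m n hm hn F hcol
end

section
/- If F is an m-by-n equiangular tight frame (unit-norm columns, FF' = (n/m)I_m, |⟨f_i,f_j⟩|² = (n−m)/((n−1)m) for all i≠j) and P = diag of i.i.d. Bernoulli(p), then (1/n)·E[tr((FPF')²)] = p + p²(n/m − 1) exactly. -/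
/-!
With the Gram matrix `G = Fᴴ F`, cyclicity of the trace gives
`tr((F P Fᴴ)²) = tr((P G)²) = ∑ᵢⱼ Pᵢ Pⱼ |Gᵢⱼ|²`, and for independent Bernoulli(p) selectors
`E[Pᵢ Pⱼ]` is `p` on the diagonal and `p²` off it. The moment is therefore determined by
`∑ᵢ |Gᵢᵢ|² = n` (unit-norm columns) and by the Frobenius norm
`∑ᵢⱼ |Gᵢⱼ|² = tr((F Fᴴ)²) = n² / m` (tightness).
-/

open Matrix BigOperators Finset

/-- Probability weight of a Bernoulli(p) selection pattern `ε`. -/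
noncomputable def berWeight (n : ℕ) (p : ℝ) (ε : Fin n → Bool) : ℝ :=
  ∏ i, if ε i then p else 1 - p

/-- The diagonal 0/1 selection matrix `P` determined by `ε`. -/
noncomputable def selMat (n : ℕ) (ε : Fin n → Bool) : Matrix (Fin n) (Fin n) ℂ :=
  Matrix.diagonal (fun i => if ε i then (1 : ℂ) else 0)

/-- Expected `d`-th moment `(1/n)·E[tr((FPF')^d)]` of a Bernoulli(p) subframe. -/
noncomputable def expMoment (m n : ℕ) (p : ℝ) (F : Matrix (Fin m) (Fin n) ℂ)
    (d : ℕ) : ℝ :=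
  (1 / (n : ℝ)) *
    ∑ ε : Fin n → Bool, berWeight n p ε *
      (Matrix.trace ((F * selMat n ε * Fᴴ) ^ d)).re

theorem sum_berWeight_mul_prod_indicator {n : ℕ} (p : ℝ) (S : Finset (Fin n)) :
    ∑ ε : Fin n → Bool, berWeight n p ε * ∏ k ∈ S, (if ε k then (1 : ℝ) else 0) = p ^ #S := by
  have hfactor : ∀ ε : Fin n → Bool,
      berWeight n p ε * ∏ k ∈ S, (if ε k then (1 : ℝ) else 0)
        = ∏ k, (if ε k then p else 1 - p) * (if k ∈ S then (if ε k then 1 else 0) else 1) := by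
    intro ε
    rw [prod_mul_distrib, Fintype.prod_ite_mem, berWeight]
  simp only [hfactor]
  rw [← Fintype.prod_sum fun k (b : Bool) =>
    (if b then p else 1 - p) * (if k ∈ S then (if b then 1 else 0) else 1)]
  have hsum : ∀ k, ∑ b : Bool,
      (if b then p else 1 - p) * (if k ∈ S then (if b then 1 else 0) else 1)
        = if k ∈ S then p else 1 := by
    intro k
    split_ifs <;> simp
  simp_rw [hsum, Fintype.prod_ite_mem, prod_const]

theorem sum_berWeight_mul_indicator_mul_indicator {n : ℕ} (p : ℝ) (i j : Fin n) :
    ∑ ε : Fin n → Bool, berWeight n p ε *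
        ((if ε i then (1 : ℝ) else 0) * (if ε j then (1 : ℝ) else 0))
      = if i = j then p else p ^ 2 := by
  split_ifs with hij
  · subst hij
    have hidem : ∀ b : Bool,
        (if b then (1 : ℝ) else 0) * (if b then 1 else 0) = if b then 1 else 0 := by
      intro b; cases b <;> simp
    simpa [hidem] using sum_berWeight_mul_prod_indicator p {i}
  · simpa [prod_pair hij, hij] using sum_berWeight_mul_prod_indicator p {i, j}

theorem Matrix.trace_sq_mul_diagonal_mul_conjTranspose {𝕜 ι κ : Type*} [RCLike 𝕜]
    [Fintype ι] [DecidableEq ι] [Fintype κ] [DecidableEq κ] (F : Matrix ι κ 𝕜) (d : κ → 𝕜) :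
    trace ((F * diagonal d * Fᴴ) ^ 2)
      = ∑ i, ∑ j, d i * d j * (‖(Fᴴ * F) i j‖ : 𝕜) ^ 2 := by
  have hG := isHermitian_conjTranspose_mul_self F
  have hcycle : trace ((F * diagonal d * Fᴴ) ^ 2) = trace ((diagonal d * (Fᴴ * F)) ^ 2) := by
    rw [pow_two, pow_two, show F * diagonal d * Fᴴ * (F * diagonal d * Fᴴ)
      = F * (diagonal d * (Fᴴ * F) * diagonal d * Fᴴ) by simp only [Matrix.mul_assoc],
      trace_mul_comm]
    simp only [Matrix.mul_assoc]
  rw [hcycle, pow_two, trace]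
  refine sum_congr rfl fun i _ => ?_
  rw [diag_apply, mul_apply]
  refine sum_congr rfl fun j _ => ?_
  rw [diagonal_mul, diagonal_mul, ← hG.apply j i, ← RCLike.mul_conj]
  simp only [RCLike.star_def]
  ring

theorem Matrix.sum_sum_norm_sq_conjTranspose_mul_self_s13 {𝕜 ι κ : Type*} [RCLike 𝕜]
    [Fintype ι] [DecidableEq ι] [Fintype κ] [DecidableEq κ] (F : Matrix ι κ 𝕜) :
    ∑ i, ∑ j, (‖(Fᴴ * F) i j‖ : 𝕜) ^ 2 = trace ((F * Fᴴ) ^ 2) := by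
  simpa using (trace_sq_mul_diagonal_mul_conjTranspose F 1).symm

theorem expMoment_two_eq (m n : ℕ) (p : ℝ) (F : Matrix (Fin m) (Fin n) ℂ) :
    expMoment m n p F 2 = (1 / (n : ℝ)) *
      ((p - p ^ 2) * ∑ i, ‖(Fᴴ * F) i i‖ ^ 2 + p ^ 2 * ∑ i, ∑ j, ‖(Fᴴ * F) i j‖ ^ 2) := by
  set x : Fin n → Fin n → ℝ := fun i j => ‖(Fᴴ * F) i j‖ ^ 2
  have htrace : ∀ ε : Fin n → Bool, (trace ((F * selMat n ε * Fᴴ) ^ 2)).re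
      = ∑ i, ∑ j, (if ε i then (1 : ℝ) else 0) * (if ε j then (1 : ℝ) else 0) * x i j := by
    intro ε
    rw [selMat, trace_sq_mul_diagonal_mul_conjTranspose, Complex.re_sum]
    refine sum_congr rfl fun i _ => ?_
    rw [Complex.re_sum]
    refine sum_congr rfl fun j _ => ?_
    cases ε i <;> cases ε j <;> simp [x, ← Complex.ofReal_pow]
  have hexpect : ∑ ε : Fin n → Bool, berWeight n p ε * (trace ((F * selMat n ε * Fᴴ) ^ 2)).re
      = ∑ i, ∑ j, (if i = j then p else p ^ 2) * x i j := by
    simp only [htrace, ← sum_berWeight_mul_indicator_mul_indicator, mul_sum, sum_mul]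
    rw [sum_comm]
    refine sum_congr rfl fun i _ => ?_
    rw [sum_comm]
    exact sum_congr rfl fun j _ => sum_congr rfl fun ε _ => by ring
  have hsplit : ∀ i j, (if i = j then p else p ^ 2) * x i j
      = p ^ 2 * x i j + if i = j then (p - p ^ 2) * x i j else 0 := by
    intro i j
    split_ifs <;> ring
  rw [expMoment, hexpect]
  simp only [hsplit, sum_add_distrib, sum_ite_eq, mem_univ, if_true, ← mul_sum]
  ring

theorem erasure_welch_stmt13_general (m n : ℕ) (hmn : m < n)
    (p : ℝ)
    (F : Matrix (Fin m) (Fin n) ℂ)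
    (hcol : ∀ i, (Fᴴ * F) i i = 1)
    (htight : F * Fᴴ = ((n : ℂ) / (m : ℂ)) • (1 : Matrix (Fin m) (Fin m) ℂ)) :
    expMoment m n p F 2 = p + p ^ 2 * ((n : ℝ) / m - 1) := by
  have hn : (n : ℝ) ≠ 0 := Nat.cast_ne_zero.mpr (by omega)
  have hdiag : ∑ i, ‖(Fᴴ * F) i i‖ ^ 2 = (n : ℝ) := by simp [hcol]
  have hfrob : ∑ i, ∑ j, ‖(Fᴴ * F) i j‖ ^ 2 = ((n : ℝ) / m) ^ 2 * m := by
    have h := sum_sum_norm_sq_conjTranspose_mul_self_s13 F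
    rw [htight, smul_pow, one_pow, trace_smul, trace_one, Fintype.card_fin, smul_eq_mul] at h
    apply Complex.ofReal_injective
    push_cast
    exact_mod_cast h
  rw [expMoment_two_eq, hdiag, hfrob]
  field_simp
  ring

theorem erasure_welch_stmt13 (m n : ℕ) (hm : 1 ≤ m) (hmn : m < n)
    (p : ℝ) (hp0 : 0 ≤ p) (hp1 : p ≤ 1)
    (F : Matrix (Fin m) (Fin n) ℂ)
    (hcol : ∀ i, (Fᴴ * F) i i = 1)
    (htight : F * Fᴴ = ((n : ℂ) / (m : ℂ)) • (1 : Matrix (Fin m) (Fin m) ℂ))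
    (hang : ∀ i j, i ≠ j →
      ‖(Fᴴ * F) i j‖ ^ 2 = ((n : ℝ) - m) / (((n : ℝ) - 1) * m)) :
    expMoment m n p F 2 = p + p ^ 2 * ((n : ℝ) / m - 1) :=
  erasure_welch_stmt13_general m n hmn p F hcol htight
end
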